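/- (Proposition 2, part 1) Let n = 3 and 0 < r_1 < r_2 < r_3. The shortest parade α_1 = α_2 = α_3 = 0 is a critical point of L at which the Hessian matrix in the reduced coordinates (α_1, α_2) is positive definite; moreover it is a global minimum of L: L(α_1, α_2) ≥ L(0, 0) for all (α_1, α_2). -/

import Mathlib

/-!
Each chord `ell r r' θ = √(r² + r'² - 2 r r' cos θ)` is shortest at `θ = 0`, so the parade with
all angles zero minimises every edge simultaneously; this gives the global minimum and, since
`sin 0 = 0`, criticality. At `θ = 0` the chord has second derivative `κ = r r' / |r - r'|`, so the
Hessian is `κ₁₂ (e₁ - e₂)(e₁ - e₂)ᵀ + diag(κ₃₁, κ₂₃)`: a positive semidefinite rank-one matrix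
plus a positive diagonal one.
-/

open Real

/-- Length of the chordal segment between points at radii `r`, `r'` whose polar angles
differ by `θ`. -/
noncomputable def ell (r r' θ : ℝ) : ℝ :=
  Real.sqrt (r ^ 2 + r' ^ 2 - 2 * r * r' * Real.cos θ)

/-- The perimeter of the connecting cycle for three concentric circles of radii
`r1, r2, r3`, as a function of the polar angles `a1, a2` of the first two vertices,
the third angle being fixed to `0`. -/
noncomputable def L3 (r1 r2 r3 : ℝ) (a1 a2 : ℝ) : ℝ :=
  ell r1 r2 (a2 - a1) + ell r2 r3 (0 - a2) + ell r3 r1 (a1 - 0)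

/-- Partial derivative in the first variable. -/
noncomputable def pd1 (f : ℝ → ℝ → ℝ) (a b : ℝ) : ℝ := deriv (fun x => f x b) a

/-- Partial derivative in the second variable. -/
noncomputable def pd2 (f : ℝ → ℝ → ℝ) (a b : ℝ) : ℝ := deriv (fun y => f a y) b

/-- The Hessian matrix of `L3 r1 r2 r3` at `(a, b)` in the reduced coordinates
`(α₁, α₂)`. -/
noncomputable def hess3 (r1 r2 r3 a b : ℝ) : Matrix (Fin 2) (Fin 2) ℝ :=
  !![pd1 (pd1 (L3 r1 r2 r3)) a b, pd1 (pd2 (L3 r1 r2 r3)) a b;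
     pd2 (pd1 (L3 r1 r2 r3)) a b, pd2 (pd2 (L3 r1 r2 r3)) a b]

noncomputable def ellDeriv (r r' θ : ℝ) : ℝ := r * r' * sin θ / ell r r' θ

lemma ell_zero (r r' : ℝ) : ell r r' 0 = |r - r'| := by
  rw [ell, cos_zero, ← sqrt_sq_eq_abs]
  ring_nf

lemma ell_zero_le_ell {r r' : ℝ} (h : 0 ≤ r * r') (θ : ℝ) : ell r r' 0 ≤ ell r r' θ := by
  apply sqrt_le_sqrt
  nlinarith [cos_le_one θ, cos_zero]

lemma ell_pos {r r' : ℝ} (hr : 0 ≤ r) (hr' : 0 ≤ r') (h : r ≠ r') (θ : ℝ) : 0 < ell r r' θ :=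
  (ell_zero r r' ▸ abs_sub_pos.mpr h).trans_le (ell_zero_le_ell (mul_nonneg hr hr') θ)

lemma hasDerivAt_ell {r r' θ : ℝ} (h : ell r r' θ ≠ 0) :
    HasDerivAt (ell r r') (ellDeriv r r' θ) θ := by
  have hq : HasDerivAt (fun t => r ^ 2 + r' ^ 2 - 2 * r * r' * cos t)
      (2 * r * r' * sin θ) θ := by
    simpa using ((hasDerivAt_cos θ).const_mul (2 * r * r')).const_sub (r ^ 2 + r' ^ 2)
  refine (hq.sqrt (sqrt_ne_zero'.mp h).ne').congr_deriv ?_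
  rw [ellDeriv, ← ell]
  field_simp

lemma ellDeriv_zero (r r' : ℝ) : ellDeriv r r' 0 = 0 := by simp [ellDeriv]

lemma hasDerivAt_ellDeriv_zero {r r' : ℝ} (h : r ≠ r') :
    HasDerivAt (ellDeriv r r') (r * r' / |r - r'|) 0 := by
  have hell : ell r r' 0 ≠ 0 := by rw [ell_zero]; exact abs_ne_zero.mpr (sub_ne_zero.mpr h)
  have hnum := (hasDerivAt_sin 0).const_mul (r * r')
  refine (hnum.div (hasDerivAt_ell hell) hell).congr_deriv ?_
  rw [ellDeriv_zero, ← ell_zero, cos_zero, mul_zero, sub_zero]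
  field_simp

lemma posDef_fin_two_of_nonneg_of_pos {a b c : ℝ} (ha : 0 ≤ a) (hb : 0 < b) (hc : 0 < c) :
    !![a + c, -a; -a, a + b].PosDef := by
  have hsplit : !![a + c, -a; -a, a + b] =
      a • Matrix.vecMulVec ![1, -1] (star ![1, -1]) + Matrix.diagonal ![c, b] := by
    ext i j
    fin_cases i <;> fin_cases j <;> simp [Matrix.vecMulVec]
  rw [hsplit]
  refine Matrix.PosDef.posSemidef_add ((Matrix.posSemidef_vecMulVec_self_star _).smul ha) ?_
  exact Matrix.PosDef.diagonal fun i => by fin_cases i <;> simpa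

section Perimeter

variable {r1 r2 r3 : ℝ}

lemma hasDerivAt_L3_fst (h1 : 0 ≤ r1) (h2 : 0 ≤ r2) (h3 : 0 ≤ r3) (h12 : r1 ≠ r2)
    (h31 : r3 ≠ r1) (a b : ℝ) :
    HasDerivAt (fun t => L3 r1 r2 r3 t b) (ellDeriv r3 r1 a - ellDeriv r1 r2 (b - a)) a := by
  have h₁₂ := (hasDerivAt_ell (ell_pos h1 h2 h12 (b - a)).ne').comp_const_sub b a
  have h₃₁ := (hasDerivAt_ell (ell_pos h3 h1 h31 (a - 0)).ne').comp_sub_const a 0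
  exact ((h₁₂.add_const (ell r2 r3 (0 - b))).add h₃₁).congr_deriv (by rw [sub_zero]; ring)

lemma hasDerivAt_L3_snd (h1 : 0 ≤ r1) (h2 : 0 ≤ r2) (h3 : 0 ≤ r3) (h12 : r1 ≠ r2)
    (h23 : r2 ≠ r3) (a b : ℝ) :
    HasDerivAt (fun t => L3 r1 r2 r3 a t) (ellDeriv r1 r2 (b - a) - ellDeriv r2 r3 (0 - b)) b := by
  have h₁₂ := (hasDerivAt_ell (ell_pos h1 h2 h12 (b - a)).ne').comp_sub_const b a
  have h₂₃ := (hasDerivAt_ell (ell_pos h2 h3 h23 (0 - b)).ne').comp_const_sub 0 b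
  exact ((h₁₂.add h₂₃).add_const (ell r3 r1 (a - 0))).congr_deriv (by ring)

lemma L3_zero_zero_le (h1 : 0 ≤ r1) (h2 : 0 ≤ r2) (h3 : 0 ≤ r3) (a b : ℝ) :
    L3 r1 r2 r3 0 0 ≤ L3 r1 r2 r3 a b := by
  simp only [L3, sub_self]
  gcongr ?_ + ?_ + ?_ <;> apply ell_zero_le_ell <;> positivity

lemma hess3_zero_zero (h1 : 0 ≤ r1) (h2 : 0 ≤ r2) (h3 : 0 ≤ r3) (h12 : r1 ≠ r2)
    (h23 : r2 ≠ r3) (h31 : r3 ≠ r1) :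
    hess3 r1 r2 r3 0 0 =
      !![r1 * r2 / |r1 - r2| + r3 * r1 / |r3 - r1|, -(r1 * r2 / |r1 - r2|);
        -(r1 * r2 / |r1 - r2|), r1 * r2 / |r1 - r2| + r2 * r3 / |r2 - r3|] := by
  have hpd1 : pd1 (L3 r1 r2 r3) = fun a b => ellDeriv r3 r1 a - ellDeriv r1 r2 (b - a) :=
    funext₂ fun a b => (hasDerivAt_L3_fst h1 h2 h3 h12 h31 a b).deriv
  have hpd2 : pd2 (L3 r1 r2 r3) = fun a b => ellDeriv r1 r2 (b - a) - ellDeriv r2 r3 (0 - b) :=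
    funext₂ fun a b => (hasDerivAt_L3_snd h1 h2 h3 h12 h23 a b).deriv
  have k12 : HasDerivAt (ellDeriv r1 r2) (r1 * r2 / |r1 - r2|) (0 - 0) := by
    simpa using hasDerivAt_ellDeriv_zero h12
  have k23 : HasDerivAt (ellDeriv r2 r3) (r2 * r3 / |r2 - r3|) (0 - 0) := by
    simpa using hasDerivAt_ellDeriv_zero h23
  have k31 := hasDerivAt_ellDeriv_zero h31
  rw [hess3, hpd1, hpd2]
  simp only [pd1, pd2]
  ext i j
  fin_cases i <;> fin_cases j <;> simp only [Fin.zero_eta, Fin.mk_one, Matrix.of_apply,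
    Matrix.cons_val_zero, Matrix.cons_val_one]
  · exact (k31.sub (k12.comp_const_sub 0 0)).deriv.trans (by ring)
  · exact (k12.comp_const_sub 0 0 |>.sub_const _).deriv
  · exact ((k12.comp_sub_const 0 0).const_sub _).deriv.trans (by ring)
  · exact ((k12.comp_sub_const 0 0).sub (k23.comp_const_sub 0 0)).deriv.trans (by ring)

end Perimeter

/-- Proposition 2, part 1: for `0 < r1 < r2 < r3` the shortest parade
`α₁ = α₂ = α₃ = 0` is a critical point of the perimeter, the Hessian in the reduced
coordinates `(α₁, α₂)` is positive definite there, and it is a global minimum. -/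
theorem stmt_6 (r1 r2 r3 : ℝ) (h1 : 0 < r1) (h12 : r1 < r2) (h23 : r2 < r3) :
    HasDerivAt (fun t => L3 r1 r2 r3 t 0) 0 0 ∧
    HasDerivAt (fun t => L3 r1 r2 r3 0 t) 0 0 ∧
    (hess3 r1 r2 r3 0 0).PosDef ∧
    ∀ a1 a2 : ℝ, L3 r1 r2 r3 0 0 ≤ L3 r1 r2 r3 a1 a2 := by
  have h2 : 0 < r2 := h1.trans h12
  have h3 : 0 < r3 := h2.trans h23
  have h31 : r3 ≠ r1 := (h12.trans h23).ne'
  refine ⟨?_, ?_, ?_, L3_zero_zero_le h1.le h2.le h3.le⟩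
  · simpa [ellDeriv_zero] using hasDerivAt_L3_fst h1.le h2.le h3.le h12.ne h31 0 0
  · simpa [ellDeriv_zero] using hasDerivAt_L3_snd h1.le h2.le h3.le h12.ne h23.ne 0 0
  · rw [hess3_zero_zero h1.le h2.le h3.le h12.ne h23.ne h31]
    exact posDef_fin_two_of_nonneg_of_pos (by positivity)
      (div_pos (by positivity) (abs_sub_pos.mpr h23.ne))
      (div_pos (by positivity) (abs_sub_pos.mpr h31))
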